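/- Let X be a d×n real matrix and A a d×d real symmetric matrix. Let M = (1/n)XXᵀ with eigenvalues σ₁ ≥ … ≥ σ_d, and let M̂ = M + A with eigenvalues σ̂₁ ≥ … ≥ σ̂_d and corresponding orthonormal eigenvectors v̂₁,…,v̂_d; set V̂_{d'} = [v̂₁,…,v̂_{d'}]. Then the exact identity holds: ‖X − V̂_{d'} V̂_{d'}ᵀ X‖_F² = n Σ_{i ≤ d'} (σᵢ − σ̂ᵢ) + n·tr(A V̂_{d'} V̂_{d'}ᵀ) + n Σ_{i > d'} σᵢ. -/

import Mathlib

open MeasureTheory Matrix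
open scoped ENNReal

/-- The squared Frobenius norm of a matrix. -/
noncomputable def frobSq {m n : ℕ} (B : Matrix (Fin m) (Fin n) ℝ) : ℝ := ∑ i, ∑ j, B i j ^ 2

/-- The operator (spectral) norm of a square matrix. -/
noncomputable def opNorm {d : ℕ} (A : Matrix (Fin d) (Fin d) ℝ) : ℝ :=
  ‖Matrix.toEuclideanCLM (𝕜 := ℝ) A‖

/-- A family of vectors in `ℝ^d` is orthonormal (with respect to the Euclidean inner product). -/
def OrthonormalFamily {κ : Type*} [DecidableEq κ] {d : ℕ} (v : κ → Fin d → ℝ) : Prop :=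
  ∀ i j, v i ⬝ᵥ v j = if i = j then (1 : ℝ) else 0

/-!
Write `P = V̂_{d'} V̂_{d'}ᵀ`, an orthogonal projection. Then
`‖X - P X‖_F² = tr (X Xᵀ) - tr (P X Xᵀ) = n tr M - n tr (M P)`. Diagonalising `M` in its
eigenbasis gives `tr M = Σ σᵢ`, and since the columns of `V̂_{d'}` are eigenvectors of `M + A`,
`tr ((M + A) P) = Σ_{i < d'} σ̂ᵢ`. Splitting `Σ σᵢ` at `d'` gives the identity.
-/

theorem frobSq_eq_trace_mul_transpose {m n : ℕ} (B : Matrix (Fin m) (Fin n) ℝ) :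
    frobSq B = (B * Bᵀ).trace := by
  simp [frobSq, Matrix.trace, Matrix.mul_apply, sq]

theorem frobSq_sub_mul_of_isSymm_of_isIdempotentElem {m n : ℕ}
    {P : Matrix (Fin m) (Fin m) ℝ} (hPs : P.IsSymm) (hPi : IsIdempotentElem P)
    (X : Matrix (Fin m) (Fin n) ℝ) :
    frobSq (X - P * X) = (X * Xᵀ).trace - (P * (X * Xᵀ)).trace := by
  have hexp : (X - P * X) * (X - P * X)ᵀ
      = X * Xᵀ - P * (X * Xᵀ) - X * Xᵀ * P + P * (X * Xᵀ) * P := by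
    rw [transpose_sub, transpose_mul, hPs.eq, Matrix.sub_mul, Matrix.mul_sub, Matrix.mul_sub]
    simp only [Matrix.mul_assoc]
    abel
  have hright : (X * Xᵀ * P).trace = (P * (X * Xᵀ)).trace := trace_mul_comm _ _
  have hsandwich : (P * (X * Xᵀ) * P).trace = (P * (X * Xᵀ)).trace := by
    rw [trace_mul_comm, ← Matrix.mul_assoc, hPi.eq]
  rw [frobSq_eq_trace_mul_transpose, hexp, trace_add, trace_sub, trace_sub, hright, hsandwich]
  ring

namespace OrthonormalFamily

variable {κ : Type*} [DecidableEq κ] {d : ℕ} {u : κ → Fin d → ℝ}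

theorem comp_injective {ι : Type*} [DecidableEq ι] (hu : OrthonormalFamily u) {f : ι → κ}
    (hf : Function.Injective f) : OrthonormalFamily (u ∘ f) := fun i j => by
  simp [hu (f i) (f j), hf.eq_iff]

theorem mul_transpose_self (hu : OrthonormalFamily u) : of u * (of u)ᵀ = 1 := by
  ext i j
  simpa [Matrix.mul_apply, dotProduct, Matrix.one_apply] using hu i j

theorem isIdempotentElem_transpose_mul_self [Fintype κ] (hu : OrthonormalFamily u) :
    IsIdempotentElem ((of u)ᵀ * of u) := by
  rw [IsIdempotentElem, Matrix.mul_assoc, ← Matrix.mul_assoc (of u), hu.mul_transpose_self,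
    Matrix.one_mul]

/-- `tr (B Uᵀ U) = Σ uᵢᵀ B uᵢ`, and each summand is the eigenvalue `s i`. -/
theorem trace_mul_transpose_mul_self_of_mulVec_eq [Fintype κ] {B : Matrix (Fin d) (Fin d) ℝ}
    {s : κ → ℝ} (hu : OrthonormalFamily u) (heig : ∀ i, B *ᵥ u i = s i • u i) :
    (B * ((of u)ᵀ * of u)).trace = ∑ i, s i := by
  rw [← Matrix.mul_assoc, trace_mul_comm, Matrix.trace]
  refine Finset.sum_congr rfl fun i _ => ?_
  have hquad : (of u * (B * (of u)ᵀ)) i i = u i ⬝ᵥ (B *ᵥ u i) := by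
    simp [Matrix.mul_apply, dotProduct, mulVec, Finset.mul_sum]
  simp [hquad, heig i, hu i i]

theorem trace_eq_sum_of_mulVec_eq {B : Matrix (Fin d) (Fin d) ℝ} {s : Fin d → ℝ}
    {v : Fin d → Fin d → ℝ} (hv : OrthonormalFamily v)
    (heig : ∀ i, B *ᵥ v i = s i • v i) :
    B.trace = ∑ i, s i := by
  have hvv : (of v)ᵀ * of v = 1 := mul_eq_one_comm.mp hv.mul_transpose_self
  simpa [hvv] using hv.trace_mul_transpose_mul_self_of_mulVec_eq heig

end OrthonormalFamily

theorem Fin.sum_filter_val_lt {M : Type*} [AddCommMonoid M] {m d : ℕ} (h : m ≤ d)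
    (f : Fin d → M) :
    ∑ i ∈ Finset.univ.filter (fun i : Fin d => i.val < m), f i
      = ∑ j : Fin m, f (j.castLE h) := by
  have hset : Finset.univ.filter (fun i : Fin d => i.val < m) = Finset.univ.map (castLEEmb h) := by
    ext i
    simp only [Finset.mem_filter, Finset.mem_univ, true_and, Finset.mem_map, castLEEmb_apply]
    exact ⟨fun hi => ⟨⟨i.val, hi⟩, rfl⟩, by rintro ⟨j, rfl⟩; exact j.isLt⟩
  simp [hset]

theorem Fin.sum_filter_val_lt_add_sum_filter_le {M : Type*} [AddCommMonoid M] {d : ℕ} (m : ℕ)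
    (f : Fin d → M) :
    ∑ i ∈ Finset.univ.filter (fun i : Fin d => i.val < m), f i
      + ∑ i ∈ Finset.univ.filter (fun i : Fin d => m ≤ i.val), f i = ∑ i, f i := by
  simpa only [not_lt] using
    Finset.sum_filter_add_sum_filter_not Finset.univ (fun i : Fin d => i.val < m) f

theorem stmt_4_general (d n d' : ℕ) (hn : 1 ≤ n) (hd' : d' ≤ d)
    (X : Matrix (Fin d) (Fin n) ℝ) (A : Matrix (Fin d) (Fin d) ℝ)
    (σ : Fin d → ℝ) (v : Fin d → Fin d → ℝ)
    (hv : OrthonormalFamily v)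
    (heig : ∀ i, ((n : ℝ)⁻¹ • (X * Xᵀ)).mulVec (v i) = σ i • v i)
    (σh : Fin d → ℝ) (vh : Fin d → Fin d → ℝ)
    (hvh : OrthonormalFamily vh)
    (heigh : ∀ i, ((n : ℝ)⁻¹ • (X * Xᵀ) + A).mulVec (vh i) = σh i • vh i)
    (Vh : Matrix (Fin d) (Fin d') ℝ) (hVh : ∀ i j, Vh i j = vh (Fin.castLE hd' j) i) :
    frobSq (X - Vh * Vhᵀ * X)
      = n * (∑ i ∈ Finset.univ.filter fun i : Fin d => i.val < d', (σ i - σh i))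
        + n * Matrix.trace (A * Vh * Vhᵀ)
        + n * ∑ i ∈ Finset.univ.filter fun i : Fin d => d' ≤ i.val, σ i := by
  set M := (n : ℝ)⁻¹ • (X * Xᵀ)
  set w := vh ∘ Fin.castLE hd'
  have hVh' : Vh = (of w)ᵀ := by ext i j; simp [hVh, w]
  have hw : OrthonormalFamily w := hvh.comp_injective (Fin.castLE_injective hd')
  subst hVh'
  rw [transpose_transpose, Matrix.mul_assoc A]
  set P := (of w)ᵀ * of w
  have hXXt : X * Xᵀ = (n : ℝ) • M := by
    rw [smul_smul, mul_inv_cancel₀ (by positivity), one_smul]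
  clear_value M
  have htrM : M.trace = ∑ i, σ i := hv.trace_eq_sum_of_mulVec_eq heig
  have htrMAP : (M * P).trace + (A * P).trace = ∑ j : Fin d', σh (j.castLE hd') := by
    rw [← trace_add, ← add_mul]
    exact hw.trace_mul_transpose_mul_self_of_mulVec_eq fun j => heigh _
  rw [frobSq_sub_mul_of_isSymm_of_isIdempotentElem (transpose_mul _ _ : P.IsSymm)
      hw.isIdempotentElem_transpose_mul_self,
    hXXt, Matrix.mul_smul, trace_smul, trace_smul, trace_mul_comm P M, htrM,
    Finset.sum_sub_distrib, Fin.sum_filter_val_lt hd' σh,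
    ← Fin.sum_filter_val_lt_add_sum_filter_le d' σ, smul_eq_mul, smul_eq_mul]
  linear_combination -(n : ℝ) * htrMAP

theorem stmt_4 (d n d' : ℕ) (hn : 1 ≤ n) (hd' : d' ≤ d)
    (X : Matrix (Fin d) (Fin n) ℝ) (A : Matrix (Fin d) (Fin d) ℝ) (hA : A.IsSymm)
    (σ : Fin d → ℝ) (v : Fin d → Fin d → ℝ)
    (hv : OrthonormalFamily v)
    (heig : ∀ i, ((n : ℝ)⁻¹ • (X * Xᵀ)).mulVec (v i) = σ i • v i)
    (hσ : Antitone σ)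
    (σh : Fin d → ℝ) (vh : Fin d → Fin d → ℝ)
    (hvh : OrthonormalFamily vh)
    (heigh : ∀ i, ((n : ℝ)⁻¹ • (X * Xᵀ) + A).mulVec (vh i) = σh i • vh i)
    (hσh : Antitone σh)
    (Vh : Matrix (Fin d) (Fin d') ℝ) (hVh : ∀ i j, Vh i j = vh (Fin.castLE hd' j) i) :
    frobSq (X - Vh * Vhᵀ * X)
      = n * (∑ i ∈ Finset.univ.filter fun i : Fin d => i.val < d', (σ i - σh i))
        + n * Matrix.trace (A * Vh * Vhᵀ)
        + n * ∑ i ∈ Finset.univ.filter fun i : Fin d => d' ≤ i.val, σ i :=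
  stmt_4_general d n d' hn hd' X A σ v hv heig σh vh hvh heigh Vh hVh
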